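/- Let Ω₁,…,Ωₙ (n≥2) be closed subsets of a Banach space X, x̄ ∈ ∩_{i=1}^n Ωᵢ, a₁,…,aₙ ∈ X, ρ ∈ (0,+∞], ε > 0 and φ ∈ 𝒞. Let λ > 0 and η ∈ (0,ρ) be such that ∩_{i=1}^{n}(Ωᵢ−aᵢ) ∩ B_ρ(x̄) = ∅ and φ(max_{1≤i≤n}‖aᵢ‖) < φ(d(Ω₁−a₁,…,Ωₙ−aₙ, B_η(x̄))) + ε. Then there exist points ωᵢ ∈ Ωᵢ ∩ B_λ(x̄) (i=1,…,n) and x ∈ B_η(x̄) such that: (a) 0 < max_{1≤i≤n}‖x+aᵢ−ωᵢ‖ ≤ max_{1≤i≤n}‖aᵢ‖; and (b) sup over all uᵢ ∈ Ωᵢ (i=1,…,n) and u ∈ B_η(x̄) with (u₁,…,uₙ,u) ≠ (ω₁,…,ωₙ,x) of [φ(max_{1≤i≤n}‖x+aᵢ−ωᵢ‖) − φ(max_{1≤i≤n}‖u+aᵢ−uᵢ‖)] / ‖(u₁−ω₁,…,uₙ−ωₙ,u−x)‖_{λ,η} is strictly less than ε. -/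

import Mathlib

/-!
Apply Ekeland's variational principle to `(u, v) ↦ φ (maxᵢ ‖v + aᵢ - uᵢ‖)` on the closed set
`(∏ᵢ Ωᵢ) × B̄_η(x̄)`, measured in the parametric norm `‖·‖_{λ,η}` and started at `(x̄, …, x̄, x̄)`,
where the function equals `φ (maxᵢ ‖aᵢ‖)`. Its infimum is at least `φ d`, `d` being the
nonintersect index (the bound over `B_η(x̄)` passes to the closure), so the starting point is
`ε₀`-minimal, where `ε₀ = φ (maxᵢ ‖aᵢ‖) - φ d < ε`. Ekeland with a slope `c ∈ (ε₀, ε)` gives a point at parametric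
distance `≤ ε₀ / c < 1` from the start, hence in `B_λ(x̄)ⁿ × B_η(x̄)`, satisfying the slope
inequality; the gap there is positive because the `Ωᵢ - aᵢ` do not meet in `B_ρ(x̄) ⊇ B_η(x̄)`.
-/

open Filter
open scoped ENNReal

/-- The nonintersect index `d(Ω₁,…,Ωₙ,Ω') = inf{ max_i ‖u' − uᵢ‖ : uᵢ ∈ Ωᵢ, u' ∈ Ω' }`. -/
noncomputable def nonintersectIndex {X : Type*} [NormedAddCommGroup X] {n : ℕ}
    (Ω : Fin n → Set X) (Ω' : Set X) : ℝ :=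
  sInf {r : ℝ | ∃ (u : Fin n → X) (u' : X),
    (∀ i, u i ∈ Ω i) ∧ u' ∈ Ω' ∧ r = ⨆ i, ‖u' - u i‖}

open Metric Set Topology

section Ekeland

variable {Y : Type*} [MetricSpace Y] {s : Set Y} {f : Y → ℝ} {c : ℝ}

def ekelandSet (s : Set Y) (f : Y → ℝ) (c : ℝ) (x : Y) : Set Y :=
  {y ∈ s | f y + c * dist y x ≤ f x}

lemma self_mem_ekelandSet {x : Y} (hx : x ∈ s) : x ∈ ekelandSet s f c x :=
  ⟨hx, by simp⟩

lemma ekelandSet_subset (hc : 0 ≤ c) {x y : Y} (hy : y ∈ ekelandSet s f c x) :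
    ekelandSet s f c y ⊆ ekelandSet s f c x :=
  fun z hz => ⟨hz.1, by nlinarith [dist_triangle z y x, hy.2, hz.2]⟩

lemma isClosed_ekelandSet (hs : IsClosed s) (hf : LowerSemicontinuousOn f s) (x : Y) :
    IsClosed (ekelandSet s f c x) := by
  have hg : LowerSemicontinuousOn (fun y => f y + c * dist y x) s :=
    hf.add (Continuous.continuousOn (by fun_prop)).lowerSemicontinuousOn
  obtain ⟨v, hv, hsv⟩ := lowerSemicontinuousOn_iff_preimage_Iic.1 hg (f x)
  have : ekelandSet s f c x = s ∩ v := hsv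
  exact this ▸ hs.inter hv

lemma exists_almost_min_ekelandSet (hbdd : BddBelow (f '' s)) {x : Y} (hx : x ∈ s) {δ : ℝ}
    (hδ : 0 < δ) :
    ∃ x' ∈ ekelandSet s f c x, ∀ y ∈ ekelandSet s f c x, f x' ≤ f y + δ := by
  have hne : (f '' ekelandSet s f c x).Nonempty := ⟨f x, x, self_mem_ekelandSet hx, rfl⟩
  obtain ⟨_, ⟨x', hx', rfl⟩, hlt⟩ := Real.lt_sInf_add_pos hne hδ
  refine ⟨x', hx', fun y hy => ?_⟩
  have := csInf_le (hbdd.mono (image_mono fun z hz => hz.1)) (mem_image_of_mem f hy)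
  linarith

lemma ekelandSet_subset_closedBall (hc : 0 < c) {x x' : Y} {δ : ℝ}
    (hx' : x' ∈ ekelandSet s f c x) (hmin : ∀ y ∈ ekelandSet s f c x, f x' ≤ f y + δ) :
    ekelandSet s f c x' ⊆ closedBall x' (δ / c) := fun y hy => by
  have := hmin y (ekelandSet_subset hc.le hx' hy)
  rw [mem_closedBall, le_div_iff₀ hc]
  linarith [hy.2]

theorem IsClosed.exists_ekeland [CompleteSpace Y] (hs : IsClosed s)
    (hf : LowerSemicontinuousOn f s) (hbdd : BddBelow (f '' s)) (hc : 0 < c) {x₀ : Y}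
    (hx₀ : x₀ ∈ s) :
    ∃ x ∈ s, f x + c * dist x x₀ ≤ f x₀ ∧ ∀ y ∈ s, y ≠ x → f x < f y + c * dist y x := by
  set δ : ℕ → ℝ := fun k => 1 / ((k : ℝ) + 1)
  choose! g hg hgmin using fun (k : ℕ) x (hx : x ∈ s) =>
    exists_almost_min_ekelandSet (c := c) hbdd hx (Nat.one_div_pos_of_nat (n := k))
  let u : ℕ → Y := fun k => Nat.rec x₀ g k
  have hu : ∀ k, u k ∈ s := fun k => by
    induction k with
    | zero => exact hx₀
    | succ k ih => exact (hg k _ ih).1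
  -- nested closed slices of diameter `O(δ k)`: their common point is the Ekeland point
  set T : ℕ → Set Y := fun k => ekelandSet s f c (u (k + 1))
  have hT : Antitone T := antitone_nat_of_succ_le fun k =>
    ekelandSet_subset hc.le (hg (k + 1) _ (hu (k + 1)))
  have hT_dist : ∀ k, ∀ y ∈ T k, ∀ z ∈ T k, dist y z ≤ 2 * (δ k / c) := fun k y hy z hz => by
    have hball := ekelandSet_subset_closedBall hc (hg k _ (hu k)) (hgmin k _ (hu k))
    have hy' := mem_closedBall.1 (hball hy)
    have hz' := mem_closedBall.1 (hball hz)
    linarith [dist_triangle_right y z (u (k + 1))]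
  have hδ : Tendsto (fun k => 2 * (δ k / c)) atTop (𝓝 0) := by
    simpa [δ] using (tendsto_one_div_add_atTop_nhds_zero_nat.div_const c).const_mul 2
  obtain ⟨x, hx⟩ : (⋂ k, T k).Nonempty := by
    refine nonempty_iInter_of_nonempty_biInter
      (fun k => isClosed_ekelandSet hs hf _) (fun k => ?_) (fun N => ?_) ?_
    · exact isBounded_iff.2 ⟨_, hT_dist k⟩
    · exact ⟨u (N + 1), mem_iInter₂.2 fun k hk =>
        hT hk (self_mem_ekelandSet (hu (N + 1)))⟩
    · exact squeeze_zero (fun k => diam_nonneg)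
        (fun k => diam_le_of_forall_dist_le (by positivity) (hT_dist k)) hδ
  have hxT : ∀ k, x ∈ T k := mem_iInter.1 hx
  refine ⟨x, (hxT 0).1, (ekelandSet_subset hc.le (hg 0 x₀ hx₀) (hxT 0)).2,
    fun y hy hyx => ?_⟩
  by_contra! hyx'
  have hyT : ∀ k, y ∈ T k := fun k => ekelandSet_subset hc.le (hxT k) ⟨hy, hyx'⟩
  exact hyx (dist_le_zero.1 (ge_of_tendsto' hδ fun k => hT_dist k y (hyT k) x (hxT k)))

theorem Homeomorph.exists_ekeland {Y Z : Type*} [TopologicalSpace Y] [MetricSpace Z]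
    [CompleteSpace Z] (T : Y ≃ₜ Z) {s : Set Y} (hs : IsClosed s) {f : Y → ℝ}
    (hf : LowerSemicontinuousOn f s) (hbdd : BddBelow (f '' s)) {c : ℝ} (hc : 0 < c) {x₀ : Y}
    (hx₀ : x₀ ∈ s) :
    ∃ x ∈ s, f x + c * dist (T x) (T x₀) ≤ f x₀ ∧
      ∀ y ∈ s, y ≠ x → f x < f y + c * dist (T y) (T x) := by
  obtain ⟨z, hz, hdesc, hslope⟩ := (hs.preimage T.symm.continuous).exists_ekeland
    (hf.comp T.symm.continuous.continuousOn fun _ h => h)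
    (hbdd.mono (by rintro _ ⟨z, hz, rfl⟩; exact mem_image_of_mem f hz)) hc
    (x₀ := T x₀) (by simpa using hx₀)
  refine ⟨T.symm z, hz, by simpa using hdesc, fun y hy hne => ?_⟩
  simpa using hslope (T y) (by simpa using hy) (by rintro rfl; simp at hne)

end Ekeland

lemma pi_norm_eq_iSup_norm {ι X : Type*} [Fintype ι] [NormedAddCommGroup X] (u : ι → X) :
    ‖u‖ = ⨆ i, ‖u i‖ :=
  le_antisymm
    ((pi_norm_le_iff_of_nonneg (Real.iSup_nonneg fun _ => norm_nonneg _)).2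
      fun i => Finite.le_ciSup_of_le i le_rfl)
    (Real.iSup_le (norm_le_pi_norm u) (norm_nonneg _))

section ParamScale

variable {ι X : Type*} [NormedAddCommGroup X] [NormedSpace ℝ X] {lam eta : ℝ}

/-- The rescaling `(u, v) ↦ (λ⁻¹ u, η⁻¹ v)`: it carries the parametric norm `‖·‖_{λ,η}`
to the sup norm of `(ι → X) × X`. -/
noncomputable def paramScale (hlam : 0 < lam) (heta : 0 < eta) : (ι → X) × X ≃ₜ (ι → X) × X :=
  (Homeomorph.smulOfNeZero lam⁻¹ (inv_ne_zero hlam.ne')).prodCongr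
    (Homeomorph.smulOfNeZero eta⁻¹ (inv_ne_zero heta.ne'))

lemma paramScale_apply (hlam : 0 < lam) (heta : 0 < eta) (p : (ι → X) × X) :
    paramScale hlam heta p = (lam⁻¹ • p.1, eta⁻¹ • p.2) :=
  rfl

lemma dist_paramScale [Fintype ι] (hlam : 0 < lam) (heta : 0 < eta) (p q : (ι → X) × X) :
    dist (paramScale hlam heta p) (paramScale hlam heta q) =
      max (⨆ i, lam⁻¹ * ‖p.1 i - q.1 i‖) (eta⁻¹ * ‖p.2 - q.2‖) := by
  rw [paramScale_apply, paramScale_apply, dist_eq_norm, Prod.mk_sub_mk, Prod.norm_def,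
    ← smul_sub, ← smul_sub, norm_smul, norm_smul, pi_norm_eq_iSup_norm,
    Real.norm_of_nonneg (inv_nonneg.2 hlam.le), Real.norm_of_nonneg (inv_nonneg.2 heta.le),
    Real.mul_iSup_of_nonneg (inv_nonneg.2 hlam.le)]
  rfl

lemma norm_sub_lt_of_dist_paramScale_lt_one [Fintype ι] (hlam : 0 < lam) (heta : 0 < eta)
    {p q : (ι → X) × X} (h : dist (paramScale hlam heta p) (paramScale hlam heta q) < 1) :
    (∀ i, ‖p.1 i - q.1 i‖ < lam) ∧ ‖p.2 - q.2‖ < eta := by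
  rw [dist_paramScale, max_lt_iff] at h
  obtain ⟨h₁, h₂⟩ := h
  refine ⟨fun i => ?_, ?_⟩
  · have := (Finite.le_ciSup_of_le i le_rfl).trans_lt h₁
    rwa [inv_mul_lt_iff₀ hlam, mul_one] at this
  · rwa [inv_mul_lt_iff₀ heta, mul_one] at h₂

end ParamScale

lemma continuous_iSup_of_fintype {Z ι : Type*} [TopologicalSpace Z] [Fintype ι]
    {g : ι → Z → ℝ} (hg : ∀ i, Continuous (g i)) : Continuous fun z => ⨆ i, g i z := by
  cases isEmpty_or_nonempty ι
  · simp only [Real.iSup_of_isEmpty]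
    exact continuous_const
  · simp only [← Finset.sup'_univ_eq_ciSup]
    exact Continuous.finset_sup'_apply _ fun i _ => hg i

section NonintersectIndex

variable {X : Type*} [NormedAddCommGroup X] {n : ℕ} {Ω : Fin n → Set X} {Ω' : Set X}

lemma nonintersectIndex_nonneg : 0 ≤ nonintersectIndex Ω Ω' :=
  Real.sInf_nonneg <| by
    rintro _ ⟨u, u', -, -, rfl⟩
    exact Real.iSup_nonneg fun i => norm_nonneg _

lemma nonintersectIndex_le {u : Fin n → X} {u' : X} (hu : ∀ i, u i ∈ Ω i) (hu' : u' ∈ Ω') :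
    nonintersectIndex Ω Ω' ≤ ⨆ i, ‖u' - u i‖ :=
  csInf_le ⟨0, by rintro _ ⟨u, u', -, -, rfl⟩; exact Real.iSup_nonneg fun i => norm_nonneg _⟩
    ⟨u, u', hu, hu', rfl⟩

lemma nonintersectIndex_le_of_mem_closure {u : Fin n → X} {u' : X} (hu : ∀ i, u i ∈ Ω i)
    (hu' : u' ∈ closure Ω') : nonintersectIndex Ω Ω' ≤ ⨆ i, ‖u' - u i‖ :=
  closure_minimal (t := {v | nonintersectIndex Ω Ω' ≤ ⨆ i, ‖v - u i‖})
    (fun _ hv => nonintersectIndex_le hu hv)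
    (isClosed_le continuous_const (continuous_iSup_of_fintype fun i => by fun_prop)) hu'

lemma nonintersectIndex_sub_le_of_mem_closedBall [NormedSpace ℝ X] {a u : Fin n → X}
    {xbar v : X} {eta : ℝ} (heta : 0 < eta) (hu : ∀ i, u i ∈ Ω i)
    (hv : v ∈ closedBall xbar eta) :
    nonintersectIndex (fun i => (fun z => z - a i) '' Ω i) (ball xbar eta) ≤
      ⨆ i, ‖v + a i - u i‖ := by
  simpa only [sub_sub_eq_add_sub] using nonintersectIndex_le_of_mem_closure
    (u := fun i => u i - a i) (fun i => mem_image_of_mem (· - a i) (hu i))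
    (by rwa [closure_ball _ heta.ne'])

end NonintersectIndex

lemma iSup_norm_add_sub_pos {ι X : Type*} [Finite ι] [NormedAddCommGroup X] {Ω : ι → Set X}
    {a ω : ι → X} {x : X} (hω : ∀ i, ω i ∈ Ω i) (hx : x ∉ ⋂ i, (fun z => z - a i) '' Ω i) :
    0 < ⨆ i, ‖x + a i - ω i‖ := by
  by_contra! h
  refine hx (mem_iInter.2 fun i => ⟨ω i, hω i, ?_⟩)
  have hi := norm_le_zero_iff.1
    ((Finite.le_ciSup_of_le (f := fun i => ‖x + a i - ω i‖) i le_rfl).trans h)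
  rw [sub_eq_zero] at hi
  simp [← hi]

theorem stmt8_general {X : Type*} [NormedAddCommGroup X] [NormedSpace ℝ X] [CompleteSpace X]
    {n : ℕ} (Ω : Fin n → Set X)
    (hΩ : ∀ i, IsClosed (Ω i))
    (xbar : X) (hxbar : ∀ i, xbar ∈ Ω i)
    (a : Fin n → X) (ρ : ℝ≥0∞) (ε : ℝ)
    (φ : ℝ → ℝ) (hφmono : StrictMonoOn φ (Set.Ici 0))
    (hφcont : ContinuousOn φ (Set.Ici 0))
    (lam : ℝ) (hlam : 0 < lam) (eta : ℝ) (heta : 0 < eta)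
    (hetaρ : ENNReal.ofReal eta < ρ)
    (hne : (⋂ i, (fun z => z - a i) '' Ω i) ∩ EMetric.ball xbar ρ = ∅)
    (hd : φ (⨆ i, ‖a i‖) <
      φ (nonintersectIndex (fun i => (fun z => z - a i) '' Ω i)
          (Metric.ball xbar eta)) + ε) :
    ∃ (ω : Fin n → X) (x : X),
      (∀ i, ω i ∈ Ω i ∩ Metric.ball xbar lam) ∧ x ∈ Metric.ball xbar eta ∧
      0 < (⨆ i, ‖x + a i - ω i‖) ∧ (⨆ i, ‖x + a i - ω i‖) ≤ (⨆ i, ‖a i‖) ∧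
      ∃ c < ε, ∀ (u : Fin n → X) (v : X), (∀ i, u i ∈ Ω i) →
        v ∈ Metric.ball xbar eta → ¬(u = ω ∧ v = x) →
        φ (⨆ i, ‖x + a i - ω i‖) - φ (⨆ i, ‖v + a i - u i‖) ≤
          c * max (⨆ i, lam⁻¹ * ‖u i - ω i‖) (eta⁻¹ * ‖v - x‖) := by
  set d := nonintersectIndex (fun i => (fun z => z - a i) '' Ω i) (ball xbar eta)
  set gap : (Fin n → X) × X → ℝ := fun p => ⨆ i, ‖p.2 + a i - p.1 i‖
  set C : Set ((Fin n → X) × X) := univ.pi Ω ×ˢ closedBall xbar eta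
  set p₀ : (Fin n → X) × X := (fun _ => xbar, xbar)
  have hp₀ : p₀ ∈ C := ⟨fun i _ => hxbar i, mem_closedBall_self heta.le⟩
  have hgap₀ : gap p₀ = ⨆ i, ‖a i‖ := by simp [gap, p₀]
  have hgap_nonneg : ∀ p, 0 ≤ gap p := fun p => Real.iSup_nonneg fun _ => norm_nonneg _
  have hφd : ∀ p ∈ C, φ d ≤ φ (gap p) := fun p hp =>
    hφmono.monotoneOn nonintersectIndex_nonneg (hgap_nonneg p)
      (nonintersectIndex_sub_le_of_mem_closedBall heta (fun i => hp.1 i trivial) hp.2)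
  have hφd₀ : φ d ≤ φ (⨆ i, ‖a i‖) := hgap₀ ▸ hφd p₀ hp₀
  obtain ⟨c, hc_slack, hcε⟩ := exists_between (sub_lt_iff_lt_add'.2 hd)
  have hc : 0 < c := by linarith
  have hC : IsClosed C := (isClosed_set_pi fun i _ => hΩ i).prod isClosed_closedBall
  have hf : LowerSemicontinuousOn (φ ∘ gap) C :=
    (hφcont.comp_continuous (continuous_iSup_of_fintype fun i => by fun_prop)
      hgap_nonneg).continuousOn.lowerSemicontinuousOn
  obtain ⟨⟨ω, x⟩, ⟨hω, hx⟩, hdesc, hslope⟩ := (paramScale hlam heta).exists_ekeland hC hf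
    ⟨φ d, by rintro _ ⟨p, hp, rfl⟩; exact hφd p hp⟩ hc hp₀
  rw [Function.comp_apply, Function.comp_apply, hgap₀] at hdesc
  have hnear : dist (paramScale hlam heta (ω, x)) (paramScale hlam heta p₀) < 1 := by
    have := hφd _ ⟨hω, hx⟩
    exact lt_of_mul_lt_mul_left (by linarith) hc.le
  obtain ⟨hω_near, hx_near⟩ := norm_sub_lt_of_dist_paramScale_lt_one hlam heta hnear
  refine ⟨ω, x, fun i => ⟨hω i trivial, mem_ball_iff_norm.2 (hω_near i)⟩,
    mem_ball_iff_norm.2 hx_near, iSup_norm_add_sub_pos (fun i => hω i trivial) ?_, ?_, c,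
    hcε, fun u v hu hv hne' => ?_⟩
  · exact fun hmem => hne.subset ⟨hmem, Metric.eball_subset_eball hetaρ.le
      (by rw [Metric.eball_ofReal]; exact mem_ball_iff_norm.2 hx_near)⟩
  · refine (hφmono.le_iff_le (hgap_nonneg (ω, x)) (hgap₀ ▸ hgap_nonneg p₀)).1 ?_
    linarith [mul_nonneg hc.le (dist_nonneg (x := paramScale hlam heta (ω, x))
      (y := paramScale hlam heta p₀))]
  · have := hslope (u, v) ⟨fun i _ => hu i, ball_subset_closedBall hv⟩
      fun h => hne' ⟨congrArg Prod.fst h, congrArg Prod.snd h⟩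
    rw [dist_paramScale] at this
    exact sub_le_iff_le_add'.2 this.le

/-- slope necessary conditions (global sup form) for the symmetric local
non-intersection property `⋂ᵢ(Ωᵢ−aᵢ) ∩ B_ρ(xbar) = ∅` (`ρ ∈ (0,+∞]`, modelled by
`ρ : ℝ≥0∞`, with `EMetric.ball xbar ⊤ = X`). -/
theorem stmt8 {X : Type*} [NormedAddCommGroup X] [NormedSpace ℝ X] [CompleteSpace X]
    {n : ℕ} (hn : 2 ≤ n) (Ω : Fin n → Set X)
    (hΩ : ∀ i, IsClosed (Ω i))
    (xbar : X) (hxbar : ∀ i, xbar ∈ Ω i)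
    (a : Fin n → X) (ρ : ℝ≥0∞) (hρ : 0 < ρ) (ε : ℝ) (hε : 0 < ε)
    (φ : ℝ → ℝ) (hφmono : StrictMonoOn φ (Set.Ici 0))
    (hφcont : ContinuousOn φ (Set.Ici 0)) (hφ0 : φ 0 = 0)
    (hφtop : Tendsto φ atTop atTop)
    (lam : ℝ) (hlam : 0 < lam) (eta : ℝ) (heta : 0 < eta)
    (hetaρ : ENNReal.ofReal eta < ρ)
    (hne : (⋂ i, (fun z => z - a i) '' Ω i) ∩ EMetric.ball xbar ρ = ∅)
    (hd : φ (⨆ i, ‖a i‖) <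
      φ (nonintersectIndex (fun i => (fun z => z - a i) '' Ω i)
          (Metric.ball xbar eta)) + ε) :
    ∃ (ω : Fin n → X) (x : X),
      (∀ i, ω i ∈ Ω i ∩ Metric.ball xbar lam) ∧ x ∈ Metric.ball xbar eta ∧
      0 < (⨆ i, ‖x + a i - ω i‖) ∧ (⨆ i, ‖x + a i - ω i‖) ≤ (⨆ i, ‖a i‖) ∧
      ∃ c < ε, ∀ (u : Fin n → X) (v : X), (∀ i, u i ∈ Ω i) →
        v ∈ Metric.ball xbar eta → ¬(u = ω ∧ v = x) →
        φ (⨆ i, ‖x + a i - ω i‖) - φ (⨆ i, ‖v + a i - u i‖) ≤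
          c * max (⨆ i, lam⁻¹ * ‖u i - ω i‖) (eta⁻¹ * ‖v - x‖) :=
  stmt8_general Ω hΩ xbar hxbar a ρ ε φ hφmono hφcont lam hlam eta heta hetaρ hne hd
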